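/- arXiv:math/0603147 — 2 statements merged into one kernel-verified Lean document; each statement's English description precedes it below -/
import Mathlib

section
/- Let R be an integral domain and ⋆ a semistar operation on R. If I is a ⋆-invertible nonzero ideal of R (i.e., (I(R:I))^⋆ = R^⋆), then setting T = (I^⋆ : I^⋆), one has (I^⋆ (T : I^⋆))^⋆ = T; that is, every ⋆-invertible ideal is ⋆-stable. -/
noncomputable section

section Defs

variable (R K : Type*) [CommRing R] [CommRing K] [Algebra R K]

/-- The residual `(E : F) = {x ∈ K : xF ⊆ E}` of two `R`-submodules of `K`. -/
def resid (E F : Submodule R K) : Submodule R K where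
  carrier := {x : K | ∀ y ∈ F, x * y ∈ E}
  add_mem' := by
    intro a b ha hb y hy
    simpa only [Set.mem_setOf_eq, add_mul] using E.add_mem (ha y hy) (hb y hy)
  zero_mem' := by
    intro y hy
    simp
  smul_mem' := by
    intro c x hx y hy
    simpa [smul_mul_assoc] using E.smul_mem c (hx y hy)

/-- The image of an ideal of `R` as an `R`-submodule of `K`. -/
def idealToSub (I : Ideal R) : Submodule R K :=
  Submodule.map (Algebra.linearMap R K) I

end Defs

/-- A semistar operation on an integral domain `R` with quotient field `K`. -/
structure SemistarOp (R K : Type*) [CommRing R] [Field K] [Algebra R K] where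
  star : Submodule R K → Submodule R K
  star_smul : ∀ x : K, x ≠ 0 → ∀ E : Submodule R K, E ≠ ⊥ →
    star (Submodule.span R {x} * E) = Submodule.span R {x} * star E
  mono : ∀ E F : Submodule R K, E ≠ ⊥ → E ≤ F → star E ≤ star F
  le_star : ∀ E : Submodule R K, E ≠ ⊥ → E ≤ star E
  idem : ∀ E : Submodule R K, E ≠ ⊥ → star (star E) = star E

section Ops

variable (R K : Type*) [CommRing R] [Field K] [Algebra R K]

/-- The `v`-operation (divisorial closure) `E ↦ (R : (R : E))`. -/
def vop (E : Submodule R K) : Submodule R K := resid R K 1 (resid R K 1 E)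

/-- The `t`-operation, the finite-type version of `v`. -/
def top (E : Submodule R K) : Submodule R K :=
  ⨆ (F : Submodule R K) (_ : F.FG ∧ F ≠ ⊥ ∧ F ≤ E), vop R K F

/-- The `w`-operation `E ↦ ⋃ {(E : F) : F f.g. nonzero with F^t = R}`. -/
def wop (E : Submodule R K) : Submodule R K :=
  ⨆ (F : Submodule R K) (_ : F.FG ∧ F ≠ ⊥ ∧ top R K F = 1), resid R K E F

/-- `M` is a maximal proper `f`-closed ideal (e.g. a `⋆`-maximal ideal). -/
def IsOpMaxIdeal (f : Submodule R K → Submodule R K) (M : Submodule R K) : Prop :=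
  M ≠ ⊥ ∧ M < 1 ∧ f M = M ∧
    ∀ J : Submodule R K, J ≠ ⊥ → J < 1 → f J = J → M ≤ J → M = J

/-- The localization `E R_P` of a submodule `E` at a prime `P`, inside `K`. -/
def locSub (P : Ideal R) (E : Submodule R K) : Submodule R K :=
  Submodule.span R {x : K | ∃ s : R, s ∉ P ∧ s • x ∈ E}

/-- The subring of `K` determined by the submodule `T` is a stable domain:
every nonzero ideal `E` of `T` is invertible in `(E : E)`. -/
def SubringStable (T : Submodule R K) : Prop :=
  ∀ E : Submodule R K, E ≠ ⊥ → E ≤ T → T * E ≤ E →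
    E * resid R K (resid R K E E) E = resid R K E E

/-- The subring of `K` determined by `T` is a divisorial domain: every nonzero
fractional ideal of `T` is divisorial. -/
def SubringDivisorial (T : Submodule R K) : Prop :=
  ∀ J : Submodule R K, J ≠ ⊥ → T * J ≤ J →
    (∃ x : K, x ≠ 0 ∧ ∀ y ∈ J, x * y ∈ T) →
    resid R K T (resid R K T J) = J

/-- The subring of `K` determined by `T` is `v`-coherent: for every nonzero
finitely generated ideal `I = S·T` of `T`, the ideal `(T : I)` is `v`-finite. -/
def SubringVCoherent (T : Submodule R K) : Prop :=
  ∀ S : Submodule R K, S.FG → S ≠ ⊥ → S ≤ T →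
    ∃ H : Submodule R K, H.FG ∧ H ≠ ⊥ ∧
      resid R K T (S * T) = resid R K T (resid R K T (H * T))

/-- `R` has finite character with respect to the maximal ideals singled out by `f`. -/
def OpFiniteCharacter (f : Submodule R K → Submodule R K) : Prop :=
  ∀ I : Submodule R K, I ≠ ⊥ → I ≤ 1 →
    {M : Submodule R K | IsOpMaxIdeal R K f M ∧ I ≤ M}.Finite

/-- Every nonzero finitely generated ideal is `t`-invertible (PvMD). -/
def IsPvMDsub : Prop :=
  ∀ G : Submodule R K, G.FG → G ≠ ⊥ → G ≤ 1 →
    top R K (G * resid R K 1 G) = 1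

end Ops

namespace SemistarOp

variable {R K : Type*} [CommRing R] [Field K] [Algebra R K] (s : SemistarOp R K)

/-- `⋆`-stability for the ideals of the subring determined by `T`. -/
def StarStableOver (T : Submodule R K) : Prop :=
  ∀ E : Submodule R K, E ≠ ⊥ → E ≤ T → T * E ≤ E →
    s.star (s.star E * resid R K (resid R K (s.star E) (s.star E)) (s.star E))
      = resid R K (s.star E) (s.star E)

/-- `R` is `⋆`-stable: each nonzero ideal `I` is such that `I^⋆` is
`⋆̇`-invertible in `(I^⋆ : I^⋆)`. -/
def StarStable : Prop := s.StarStableOver (1 : Submodule R K)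

/-- `⋆` is of finite type. -/
def FinType : Prop :=
  ∀ E : Submodule R K, E ≠ ⊥ →
    s.star E = ⨆ (F : Submodule R K) (_ : F.FG ∧ F ≠ ⊥ ∧ F ≤ E), s.star F

/-- `⋆ = ⋆̃`: the operation is spectral and of finite type, i.e. it is given by
`E^⋆ = ⋃ {(E : F) : F f.g. nonzero with F^⋆ = R}`. -/
def IsSpectralFT : Prop :=
  ∀ E : Submodule R K, E ≠ ⊥ →
    s.star E = ⨆ (F : Submodule R K) (_ : F.FG ∧ F ≠ ⊥ ∧ s.star F = 1), resid R K E F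

/-- The `⋆`-integral closure `R^{[⋆]} = ⋃ {(F^⋆ : F^⋆) : F f.g. nonzero}`. -/
def starIntClosure : Submodule R K :=
  ⨆ (F : Submodule R K) (_ : F.FG ∧ F ≠ ⊥), resid R K (s.star F) (s.star F)

end SemistarOp


section MoreOps

variable (R K : Type*) [CommRing R] [Field K] [Algebra R K]

/-- `R` is `w`-stable: for each nonzero ideal `I`, `I^w` is invertible in
`(I^w : I^w)` with respect to the restriction of `w`. -/
def WStable : Prop :=
  ∀ I : Submodule R K, I ≠ ⊥ → I ≤ 1 →
    wop R K (wop R K I * resid R K (resid R K (wop R K I) (wop R K I)) (wop R K I))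
      = resid R K (wop R K I) (wop R K I)

/-- `R` is completely integrally closed in its quotient field `K`. -/
def CICsub : Prop :=
  ∀ x : K, (∃ c : R, c ≠ 0 ∧ ∀ n : ℕ, c • x ^ n ∈ (1 : Submodule R K)) →
    x ∈ (1 : Submodule R K)

/-- `R` is `w`-divisorial: `w = v` on nonzero fractional ideals. -/
def WDivisorial : Prop :=
  ∀ J : Submodule R K, J ≠ ⊥ →
    (∃ d : R, d ≠ 0 ∧ ∀ x ∈ J, d • x ∈ (1 : Submodule R K)) →
    wop R K J = vop R K J

/-- `R` is a Krull domain: completely integrally closed with the ascending chain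
condition on (integral) divisorial ideals. -/
def IsKrullSub : Prop :=
  CICsub R K ∧
    ∀ c : ℕ → Submodule R K,
      (∀ n, c n ≠ ⊥ ∧ c n ≤ 1 ∧ vop R K (c n) = c n) → Monotone c →
        ∃ n, ∀ m, n ≤ m → c m = c n

end MoreOps

end

/-!
Write `T = (J^⋆ : J^⋆)` and `L = (R : J)`. From `(JL)^⋆ = R^⋆` one gets `L J^⋆ ⊆ R^⋆`, hence
`T ⊆ T (JL)^⋆ ⊆ (T J L)^⋆ ⊆ R^⋆`; conversely `R^⋆ J^⋆ ⊆ J^⋆`, so `T = R^⋆`. Then `L ⊆ (T : J^⋆)`,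
and `T = (JL)^⋆ ⊆ (J^⋆ (T : J^⋆))^⋆ ⊆ T^⋆ = T`.
-/

section Residual

variable {R K : Type*} [CommRing R] [CommRing K] [Algebra R K]

theorem resid_eq_div (E F : Submodule R K) : resid R K E F = E / F := rfl

theorem le_resid_iff_mul_le {E F G : Submodule R K} : G ≤ resid R K E F ↔ G * F ≤ E := by
  rw [resid_eq_div]
  exact Submodule.le_div_iff_mul_le

theorem resid_mul_le (E F : Submodule R K) : resid R K E F * F ≤ E :=
  le_resid_iff_mul_le.1 le_rfl

theorem resid_one_ne_bot_of_le_one [Nontrivial K] {J : Submodule R K} (hJ : J ≤ 1) :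
    resid R K 1 J ≠ ⊥ := by
  rw [resid_eq_div]
  exact ne_bot_of_le_ne_bot one_ne_zero (Submodule.one_le.2 (Submodule.one_mem_div.2 hJ))

end Residual

namespace SemistarOp

variable {R K : Type*} [CommRing R] [Field K] [Algebra R K] (s : SemistarOp R K)

def IsInvertible (E : Submodule R K) : Prop :=
  s.star (E * resid R K 1 E) = s.star 1

def IsStable (E : Submodule R K) : Prop :=
  s.star (s.star E * resid R K (resid R K (s.star E) (s.star E)) (s.star E)) =
    resid R K (s.star E) (s.star E)

theorem mul_star_le_star_mul (F : Submodule R K) {E : Submodule R K} (hE : E ≠ ⊥) :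
    F * s.star E ≤ s.star (F * E) := by
  refine Submodule.mul_le.2 fun x hx z hz => ?_
  rcases eq_or_ne x 0 with rfl | hx0
  · simp
  have hxE : Submodule.span R {x} * E ≤ F * E :=
    mul_le_mul' ((Submodule.span_singleton_le_iff_mem _ _).2 hx) le_rfl
  have hxE_ne : Submodule.span R {x} * E ≠ ⊥ := by
    simp [hx0, hE]
  have hxz : x * z ∈ s.star (Submodule.span R {x} * E) := by
    rw [s.star_smul x hx0 E hE]
    exact Submodule.mul_mem_mul (Submodule.mem_span_singleton_self x) hz
  exact s.mono _ _ hxE_ne hxE hxz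

theorem mul_star_le_star {E F G : Submodule R K} (hE : E ≠ ⊥) (hG : G ≠ ⊥)
    (h : F * E ≤ s.star G) : F * s.star E ≤ s.star G := by
  rcases eq_or_ne F ⊥ with rfl | hF
  · simp
  calc F * s.star E ≤ s.star (F * E) := s.mul_star_le_star_mul F hE
    _ ≤ s.star (s.star G) := s.mono _ _ (by simp [hF, hE]) h
    _ = s.star G := s.idem G hG

theorem star_one_mul_star_le {E : Submodule R K} (hE : E ≠ ⊥) :
    s.star 1 * s.star E ≤ s.star E := by
  refine s.mul_star_le_star hE hE ?_
  simpa only [mul_comm, mul_one] using s.mul_star_le_star_mul E one_ne_zero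

variable {s} {J : Submodule R K}

theorem resid_one_mul_star_le (hJ : J ≠ ⊥) (hL : resid R K 1 J ≠ ⊥)
    (hinv : s.IsInvertible J) : resid R K 1 J * s.star J ≤ s.star 1 := by
  refine s.mul_star_le_star hJ one_ne_zero ?_
  rw [mul_comm, ← hinv]
  exact s.le_star _ (by simp [hJ, hL])

theorem resid_star_self_eq_star_one (hJ : J ≠ ⊥) (hL : resid R K 1 J ≠ ⊥)
    (hinv : s.IsInvertible J) : resid R K (s.star J) (s.star J) = s.star 1 := by
  set T := resid R K (s.star J) (s.star J)
  have hJL : J * resid R K 1 J ≠ ⊥ := by simp [hJ, hL]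
  refine le_antisymm ?_ (le_resid_iff_mul_le.2 (s.star_one_mul_star_le hJ))
  have hTJL : T * (J * resid R K 1 J) ≤ s.star 1 :=
    calc T * (J * resid R K 1 J) = resid R K 1 J * (T * J) := by rw [mul_comm J, mul_left_comm]
      _ ≤ resid R K 1 J * (T * s.star J) := by gcongr; exact s.le_star J hJ
      _ ≤ resid R K 1 J * s.star J := by gcongr; exact resid_mul_le _ _
      _ ≤ s.star 1 := resid_one_mul_star_le hJ hL hinv
  calc T = T * 1 := (mul_one T).symm
    _ ≤ T * s.star 1 := by gcongr; exact s.le_star 1 one_ne_zero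
    _ = T * s.star (J * resid R K 1 J) := by rw [hinv]
    _ ≤ s.star 1 := s.mul_star_le_star hJL one_ne_zero hTJL

theorem isStable_of_isInvertible (hJ : J ≠ ⊥) (hL : resid R K 1 J ≠ ⊥)
    (hinv : s.IsInvertible J) : s.IsStable J := by
  have hJL : J * resid R K 1 J ≠ ⊥ := by simp [hJ, hL]
  have hL_le : resid R K 1 J ≤ resid R K (s.star 1) (s.star J) :=
    le_resid_iff_mul_le.2 (resid_one_mul_star_le hJ hL hinv)
  have hJL_le : J * resid R K 1 J ≤ s.star J * resid R K (s.star 1) (s.star J) :=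
    mul_le_mul' (s.le_star J hJ) hL_le
  have hle_one : s.star J * resid R K (s.star 1) (s.star J) ≤ s.star 1 := by
    rw [mul_comm]
    exact resid_mul_le _ _
  rw [IsStable, resid_star_self_eq_star_one hJ hL hinv]
  refine le_antisymm ?_ ?_
  · calc s.star (s.star J * resid R K (s.star 1) (s.star J))
        ≤ s.star (s.star 1) := s.mono _ _ (ne_bot_of_le_ne_bot hJL hJL_le) hle_one
      _ = s.star 1 := s.idem 1 one_ne_zero
  · calc s.star 1 = s.star (J * resid R K 1 J) := hinv.symm
      _ ≤ _ := s.mono _ _ hJL hJL_le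

end SemistarOp

theorem idealToSub_ne_bot {R K : Type*} [CommRing R] [Field K] [Algebra R K]
    [IsFractionRing R K] {I : Ideal R} (hI : I ≠ ⊥) : idealToSub R K I ≠ ⊥ := by
  rw [idealToSub, ← Submodule.map_bot (Algebra.linearMap R K)]
  exact (Submodule.map_injective_of_injective (IsFractionRing.injective R K)).ne hI

theorem idealToSub_le_one {R K : Type*} [CommRing R] [CommRing K] [Algebra R K]
    (I : Ideal R) : idealToSub R K I ≤ 1 := by
  rintro _ ⟨a, -, rfl⟩
  exact Submodule.algebraMap_mem a

theorem statement_3_general {R K : Type*} [CommRing R] [Field K] [Algebra R K]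
    [IsFractionRing R K] (s : SemistarOp R K) (I : Ideal R) (hI : I ≠ ⊥)
    (hinv : s.star (idealToSub R K I * resid R K 1 (idealToSub R K I)) = s.star 1) :
    s.star (s.star (idealToSub R K I) *
        resid R K (resid R K (s.star (idealToSub R K I)) (s.star (idealToSub R K I)))
          (s.star (idealToSub R K I)))
      = resid R K (s.star (idealToSub R K I)) (s.star (idealToSub R K I)) :=
  SemistarOp.isStable_of_isInvertible (idealToSub_ne_bot hI)
    (resid_one_ne_bot_of_le_one (idealToSub_le_one I)) hinv

/-- a `⋆`-invertible nonzero ideal `I` (i.e. `(I(R:I))^⋆ = R^⋆`)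
is `⋆`-stable: with `T = (I^⋆ : I^⋆)`, one has `(I^⋆(T : I^⋆))^⋆ = T`. -/
theorem statement_3 {R K : Type*} [CommRing R] [IsDomain R] [Field K] [Algebra R K]
    [IsFractionRing R K] (s : SemistarOp R K) (I : Ideal R) (hI : I ≠ ⊥)
    (hinv : s.star (idealToSub R K I * resid R K 1 (idealToSub R K I)) = s.star 1) :
    s.star (s.star (idealToSub R K I) *
        resid R K (resid R K (s.star (idealToSub R K I)) (s.star (idealToSub R K I)))
          (s.star (idealToSub R K I)))
      = resid R K (s.star (idealToSub R K I)) (s.star (idealToSub R K I)) :=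
  statement_3_general s I hI hinv
end

section
/- Let R be an integral domain, ⋆ a semistar operation, I a nonzero ideal of R with T = (I^⋆ : I^⋆), and suppose I^⋆ is divisorial in T, i.e., (T : (T : I^⋆)) = I^⋆. Then with J = (T : I^⋆): (a) (J : J) = T; (b) (T : I^⋆ J) = T; (c) ((I^⋆ J)^⋆ : I^⋆ J) = T. -/
lemma mem_resid' {R K : Type*} [CommRing R] [CommRing K] [Algebra R K]
    {E F : Submodule R K} {x : K} : x ∈ resid R K E F ↔ ∀ y ∈ F, x * y ∈ E := Iff.rfl

lemma mul_ne_bot' {R K : Type*} [CommRing R] [Field K] [Algebra R K]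
    {A B : Submodule R K} (hA : A ≠ ⊥) (hB : B ≠ ⊥) : A * B ≠ ⊥ := by
  rcases (Submodule.ne_bot_iff A).mp hA with ⟨a, haA, ha⟩
  rcases (Submodule.ne_bot_iff B).mp hB with ⟨b, hbB, hb⟩
  exact (Submodule.ne_bot_iff _).mpr ⟨a * b, Submodule.mul_mem_mul haA hbB, mul_ne_zero ha hb⟩

lemma star_resid_le' {R K : Type*} [CommRing R] [Field K] [Algebra R K]
    (s : SemistarOp R K) {E F : Submodule R K} (hE : s.star E = E)
    (hG : resid R K E F ≠ ⊥) : s.star (resid R K E F) ≤ resid R K E F := by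
  intro x hx y hy
  by_cases hy0 : y = 0
  · simp [hy0]
  · have hsub : Submodule.span R {y} * resid R K E F ≤ E := by
      rw [Submodule.mul_le]
      intro a ha b hb
      rcases Submodule.mem_span_singleton.mp ha with ⟨r, rfl⟩
      have : r • (b * y) ∈ E := E.smul_mem r (hb y hy)
      simpa [smul_mul_assoc, mul_comm] using this
    have hyne : Submodule.span R {y} ≠ ⊥ := by
      refine (Submodule.ne_bot_iff _).mpr ⟨y, Submodule.mem_span_singleton_self y, hy0⟩
    have hne : Submodule.span R {y} * resid R K E F ≠ ⊥ := mul_ne_bot' hyne hG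
    have h1 := s.mono _ E hne hsub
    have h2 := s.star_smul y hy0 _ hG
    have hmem : y * x ∈ s.star (Submodule.span R {y} * resid R K E F) := by
      rw [h2]
      exact Submodule.mul_mem_mul (Submodule.mem_span_singleton_self y) hx
    have := h1 hmem
    rw [hE] at this
    simpa [mul_comm] using this

/-- if `I^⋆` is divisorial in `T = (I^⋆ : I^⋆)` and `J = (T : I^⋆)`,
then (a) `(J : J) = T`; (b) `(T : I^⋆J) = T`; (c) `((I^⋆J)^⋆ : I^⋆J) = T`. -/
theorem statement_5 {R K : Type*} [CommRing R] [IsDomain R] [Field K] [Algebra R K]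
    [IsFractionRing R K] (s : SemistarOp R K) (I : Ideal R) (hI : I ≠ ⊥)
    (T J : Submodule R K)
    (hT : T = resid R K (s.star (idealToSub R K I)) (s.star (idealToSub R K I)))
    (hJ : J = resid R K T (s.star (idealToSub R K I)))
    (hdiv : resid R K T (resid R K T (s.star (idealToSub R K I)))
      = s.star (idealToSub R K I)) :
    resid R K J J = T ∧
    resid R K T (s.star (idealToSub R K I) * J) = T ∧
    resid R K (s.star (s.star (idealToSub R K I) * J)) (s.star (idealToSub R K I) * J)
      = T := by
  set E := s.star (idealToSub R K I) with hE
  -- the ideal is nonzero in K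
  have hI0 : idealToSub R K I ≠ ⊥ := by
    rcases (Submodule.ne_bot_iff I).mp hI with ⟨a, haI, ha⟩
    refine (Submodule.ne_bot_iff _).mpr ⟨algebraMap R K a, ⟨a, haI, rfl⟩, ?_⟩
    simpa using (map_ne_zero_iff _ (IsFractionRing.injective R K)).mpr ha
  have hEne : E ≠ ⊥ := by
    intro h
    exact hI0 (le_bot_iff.mp (h ▸ s.le_star _ hI0))
  have hEstar : s.star E = E := s.idem _ hI0
  have h1T : (1 : K) ∈ T := by
    rw [hT]; intro y hy; simpa using hy
  have hTne : T ≠ ⊥ := (Submodule.ne_bot_iff _).mpr ⟨1, h1T, one_ne_zero⟩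
  have hJne : J ≠ ⊥ := by
    intro h
    have hEtop : E = ⊤ := by
      rw [← hdiv, ← hJ, h]
      refine le_antisymm le_top ?_
      intro x _ y hy
      rw [Submodule.mem_bot] at hy
      simp [hy]
    have h1J : (1 : K) ∈ J := by
      rw [hJ, hEtop]
      intro y hy
      rw [hT, hEtop]
      intro z _
      exact Submodule.mem_top
    rw [h, Submodule.mem_bot] at h1J
    exact one_ne_zero h1J
  -- T is closed under star
  have hTle : s.star T ≤ T := by
    rw [hT]; exact star_resid_le' s hEstar (hT ▸ hTne)
  -- key memberships
  have hmemT : ∀ x : K, x ∈ T ↔ ∀ e ∈ E, x * e ∈ E := by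
    intro x; rw [hT]; rfl
  have hmemJ : ∀ x : K, x ∈ J ↔ ∀ e ∈ E, x * e ∈ T := by
    intro x; rw [hJ]; rfl
  -- converse key fact: if x * (E*J) ⊆ T then x ∈ T
  have hconv : ∀ x : K, (∀ z ∈ E * J, x * z ∈ T) → x ∈ T := by
    intro x hx
    rw [hmemT]
    intro e he
    have hxe : x * e ∈ resid R K T J := by
      intro j hj
      have := hx (e * j) (Submodule.mul_mem_mul he hj)
      simpa [mul_assoc] using this
    rw [hJ] at hxe
    rw [hdiv] at hxe
    exact hxe
  -- T * (E*J) ⊆ E*J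
  have hTEJ : ∀ x ∈ T, ∀ z ∈ E * J, x * z ∈ E * J := by
    intro x hx z hz
    refine Submodule.mul_induction_on hz (fun e he j hj => ?_) (fun a b ha hb => ?_)
    · have hxe : x * e ∈ E := (hmemT x).mp hx e he
      have : (x * e) * j ∈ E * J := Submodule.mul_mem_mul hxe hj
      simpa [mul_assoc] using this
    · simpa [mul_add] using (E * J).add_mem ha hb
  have hEJne : E * J ≠ ⊥ := mul_ne_bot' hEne hJne
  have hEJleT : E * J ≤ T := by
    rw [Submodule.mul_le]
    intro e he j hj
    rw [hmemT]
    intro f hf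
    have hjf : j * f ∈ T := (hmemJ j).mp hj f hf
    have : (j * f) * e ∈ E := (hmemT _).mp hjf e he
    simpa [mul_comm, mul_left_comm, mul_assoc] using this
  refine ⟨?_, ?_, ?_⟩
  · -- (a)
    refine le_antisymm ?_ ?_
    · intro x hx
      rw [hmemT]
      intro e he
      have he' : e ∈ resid R K T J := by rw [hJ, hdiv]; exact he
      have hxe : x * e ∈ resid R K T J := by
        intro j hj
        have hxj : x * j ∈ J := hx j hj
        have : e * (x * j) ∈ T := he' _ hxj
        simpa [mul_comm, mul_left_comm, mul_assoc] using this
      rw [hJ, hdiv] at hxe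
      exact hxe
    · intro x hx j hj
      rw [hmemJ]
      intro e he
      have hxe : x * e ∈ E := (hmemT x).mp hx e he
      have : j * (x * e) ∈ T := (hmemJ j).mp hj _ hxe
      simpa [mul_comm, mul_left_comm, mul_assoc] using this
  · -- (b)
    refine le_antisymm (fun x hx => hconv x hx) ?_
    intro x hx z hz
    exact hEJleT (hTEJ x hx z hz)
  · -- (c)
    have hstarEJ : s.star (E * J) ≤ T := le_trans (s.mono _ T hEJne hEJleT) hTle
    refine le_antisymm ?_ ?_
    · intro x hx
      exact hconv x (fun z hz => hstarEJ (hx z hz))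
    · intro x hx z hz
      exact s.le_star _ hEJne (hTEJ x hx z hz)
end
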